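/- There is a constant c such that for every integer ℓ ≥ 1, every induced path Q = u₁…u_q of G_ℓ satisfying τ(u_i) = τ(u₁) for all 2 ≤ i ≤ q has order q ≤ c. -/

import Mathlib

namespace PaperDefs

/-- `v : Fin n → V` is a path of order `n` in `G`: distinct vertices,
consecutive ones adjacent. -/
def IsPathSeq {V : Type*} (G : SimpleGraph V) {n : ℕ} (v : Fin n → V) : Prop :=
  Function.Injective v ∧ ∀ i j : Fin n, (j : ℕ) = (i : ℕ) + 1 → G.Adj (v i) (v j)

/-- `v : Fin n → V` is an induced path of order `n` in `G`: a path with no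
edge between vertices at distance ≥ 2 along the path. -/
def IsInducedPathSeq {V : Type*} (G : SimpleGraph V) {n : ℕ} (v : Fin n → V) : Prop :=
  IsPathSeq G v ∧ ∀ i j : Fin n, (i : ℕ) + 1 < (j : ℕ) → ¬ G.Adj (v i) (v j)

/-- `G` is `k`-degenerate: every nonempty (induced) subgraph has a vertex of
degree at most `k`. -/
def KDeg {V : Type*} (G : SimpleGraph V) (k : ℕ) : Prop :=
  ∀ s : Set V, s.Nonempty → ∃ v ∈ s, {u | u ∈ s ∧ G.Adj v u}.ncard ≤ k

/-- `G` has a Hamiltonian path. -/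
def HamPath {V : Type*} [Fintype V] (G : SimpleGraph V) : Prop :=
  ∃ v : Fin (Fintype.card V) → V, Function.Bijective v ∧
    ∀ i j : Fin (Fintype.card V), (j : ℕ) = (i : ℕ) + 1 → G.Adj (v i) (v j)

/-- `y` is `r`-reachable from `x` w.r.t. the vertex ordering given by the
injection `f : V → ℕ`. -/
def RReach {V : Type*} (G : SimpleGraph V) (f : V → ℕ) (r : ℕ) (x y : V) : Prop :=
  f y < f x ∧ ∃ w : G.Walk x y, w.IsPath ∧ w.length ≤ r ∧
    ∀ z ∈ w.support, z ≠ x → z ≠ y → f x < f z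

/-- `col_r(G) ≤ k`: some linear order on the vertices witnesses that at most `k`
vertices are `r`-reachable from every vertex. -/
def ColAtMost {V : Type*} (G : SimpleGraph V) (r k : ℕ) : Prop :=
  ∃ f : V → ℕ, Function.Injective f ∧ ∀ x : V, {y | RReach G f r x y}.ncard ≤ k

end PaperDefs
namespace PaperDefs

/-- The function `h` with `h 1 = 3` and `h (ℓ+1) = 2 + 2 * h ℓ`
(equivalently `h ℓ = 5·2^(ℓ-1) - 2` for `ℓ ≥ 1`). -/
def h : ℕ → ℕ
  | 0 => 0
  | 1 => 3
  | n + 2 => 2 + 2 * h (n + 1)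

/-- Shift a set of pairs of integers by `i`. -/
def shift (X : Set (ℕ × ℕ)) (i : ℕ) : Set (ℕ × ℕ) := (fun q => (q.1 + i, q.2 + i)) '' X

/-- The nested interval system `N_ℓ`. -/
def Nset : ℕ → Set (ℕ × ℕ)
  | 0 => ∅
  | 1 => {(1, 3)}
  | ℓ + 2 => {(1, h (ℓ + 2))} ∪ shift (Nset (ℓ + 1)) 1 ∪ shift (Nset (ℓ + 1)) (h (ℓ + 1) + 1)

/-- Nodes of the complete binary tree of depth `p`, heap-indexed by
`1, …, 2^p - 1` (node `i` has children `2i` and `2i+1`). -/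
def isNode (p i : ℕ) : Prop := 1 ≤ i ∧ i < 2 ^ p

/-- Adjacency in the complete binary tree of depth `p` (heap indexing). -/
def treeAdj (p s t : ℕ) : Prop := isNode p s ∧ isNode p t ∧ (s = t / 2 ∨ t = s / 2)

/-- The depth of node `i` (the root `1` has depth `1`). -/
def nodeDepth (i : ℕ) : ℕ := Nat.log 2 i + 1

/-- `s ⪯ t` : `s` is an ancestor of `t` (heap indexing). -/
def anc (s t : ℕ) : Prop := ∃ k, t / 2 ^ k = s

/-- `s ≺ t` : `s` is a strict ancestor of `t` (heap indexing). -/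
def strictAnc (s t : ℕ) : Prop := ∃ k, 1 ≤ k ∧ t / 2 ^ k = s

/-- The nodes of the complete binary tree of depth `p`. -/
abbrev TNode (p : ℕ) := {i : Fin (2 ^ p) // 1 ≤ (i : ℕ)}

/-- The non-root nodes of the complete binary tree of depth `p`. -/
abbrev NRNode (p : ℕ) := {i : Fin (2 ^ p) // 2 ≤ (i : ℕ)}

/-- Vertices of a blow-up of the complete binary tree of depth `p`:
for every node `s` a clique `K^s` on 3 vertices (`Sum.inl (s, i)`),
and for every non-root node `t` the four subdivision vertices
`pred t = {x₁, y₁, x₂, y₂}` (`Sum.inr (t, j)` with `j = 0, 1, 2, 3`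
standing for `x₁, y₁, x₂, y₂`; so `tpred t = {0, 2}` and `bpred t = {1, 3}`). -/
abbrev BV (p : ℕ) := (TNode p × Fin 3) ⊕ (NRNode p × Fin 4)

/-- The projection `π` mapping a vertex of the blow-up to (the heap index of)
the node of the tree it originates from. -/
def πn {p : ℕ} : BV p → ℕ
  | Sum.inl (s, _) => (s.1 : ℕ)
  | Sum.inr (t, _) => (t.1 : ℕ)

/-- The depth of a vertex of the blow-up. -/
def vDepth {p : ℕ} (u : BV p) : ℕ := nodeDepth (πn u)

/-- Edges of the triangle `K^s` (on vertex set `Fin 3`) are identified with the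
vertex they miss; `other k b` enumerates (as `b` ranges over `Bool`) the two
endpoints of the edge `k`. -/
def other (k : Fin 3) (b : Bool) : Fin 3 := k + (if b then 1 else 2)

/-- The arbitrary choices made when constructing a blow-up of the complete binary
tree of depth `p`: the injections `μ_s` from the neighbors of `s` to the edges of
`K^s` (an edge of `K^s` being encoded by the vertex of `Fin 3` it misses), the
choices `ε` of labelings of the endpoints of the edges `μ_s t`, and the top (root)
edge of the root clique, which must be outside the image of `μ` at the root. -/
structure BUChoices (p : ℕ) where
  μ : ℕ → ℕ → Fin 3
  ε : ℕ → ℕ → Bool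
  rootTop : Fin 3
  μ_inj : ∀ s t t', treeAdj p s t → treeAdj p s t' → μ s t = μ s t' → t = t'
  rootTop_spec : ∀ t, treeAdj p 1 t → μ 1 t ≠ rootTop

/-- The (encoding of the) top edge of the clique `K^s`. -/
def topIdx {p : ℕ} (C : BUChoices p) (s : ℕ) : Fin 3 :=
  if s = 1 then C.rootTop else C.μ s (s / 2)

/-- The base relation of the blow-up: clique edges inside each `K^s`, and for every
non-root node `t` with parent `s` the two paths
`L(s,t) = u₁ x₁ y₁ v₁` and `R(s,t) = u₂ x₂ y₂ v₂`, where `u₁, u₂` are the endpoints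
of `μ_s t` and `v₁, v₂` those of `μ_t s` (as labeled by `ε`). -/
def buRel {p : ℕ} (C : BUChoices p) : BV p → BV p → Prop
  | Sum.inl (s, i), Sum.inl (s', j) => s = s' ∧ i ≠ j
  | Sum.inl (s, i), Sum.inr (t, j) =>
      ((s.1 : ℕ) = (t.1 : ℕ) / 2 ∧
        ((j = 0 ∧ i = other (C.μ (s.1 : ℕ) (t.1 : ℕ)) (C.ε (s.1 : ℕ) (t.1 : ℕ))) ∨
         (j = 2 ∧ i = other (C.μ (s.1 : ℕ) (t.1 : ℕ)) (! C.ε (s.1 : ℕ) (t.1 : ℕ))))) ∨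
      ((s.1 : ℕ) = (t.1 : ℕ) ∧
        ((j = 1 ∧ i = other (C.μ (t.1 : ℕ) ((t.1 : ℕ) / 2)) (C.ε (t.1 : ℕ) ((t.1 : ℕ) / 2))) ∨
         (j = 3 ∧ i = other (C.μ (t.1 : ℕ) ((t.1 : ℕ) / 2)) (! C.ε (t.1 : ℕ) ((t.1 : ℕ) / 2)))))
  | Sum.inr (t, j), Sum.inr (t', j') => t = t' ∧ ((j = 0 ∧ j' = 1) ∨ (j = 2 ∧ j' = 3))
  | Sum.inr _, Sum.inl _ => False

/-- The blow-up of the complete binary tree of depth `p`, for the choices `C`. -/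
def blowup {p : ℕ} (C : BUChoices p) : SimpleGraph (BV p) := SimpleGraph.fromRel (buRel C)

/-- A vertex incident with the root edge of the blow-up. -/
def isRootEnd {p : ℕ} (C : BUChoices p) (u : BV p) : Prop :=
  ∃ s x, u = Sum.inl (s, x) ∧ (s.1 : ℕ) = 1 ∧ x ≠ C.rootTop

/-- The arbitrary choices made when constructing `G_ℓ`: those of the underlying
blow-up of `B_ℓ` (the complete binary tree of depth `h ℓ`) together with, for every
pair `s ≺ t`, the labeling `ρ` of the endpoints `u₁, u₂` of the top edge of `K^s`
used for the ribs towards `pred t`. -/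
structure GChoices (ℓ : ℕ) extends BUChoices (h ℓ) where
  ρ : ℕ → ℕ → Bool

/-- The rib edges: for `s ≺ t` with `(depth s, depth t) ∈ N_ℓ`, the edges
`u₁x₁, u₁x₂, u₂y₁, u₂y₂` where `u₁u₂` is the top edge of `K^s`. -/
def ribRel {ℓ : ℕ} (C : GChoices ℓ) : BV (h ℓ) → BV (h ℓ) → Prop
  | Sum.inl (s, i), Sum.inr (t, j) =>
      strictAnc (s.1 : ℕ) (t.1 : ℕ) ∧ (nodeDepth (s.1 : ℕ), nodeDepth (t.1 : ℕ)) ∈ Nset ℓ ∧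
      (((j = 0 ∨ j = 2) ∧ i = other (topIdx C.toBUChoices (s.1 : ℕ)) (C.ρ (s.1 : ℕ) (t.1 : ℕ))) ∨
       ((j = 1 ∨ j = 3) ∧ i = other (topIdx C.toBUChoices (s.1 : ℕ)) (! C.ρ (s.1 : ℕ) (t.1 : ℕ))))
  | _, _ => False

/-- The graph `G_ℓ`: the blow-up `H_ℓ` of `B_ℓ` together with the ribs. -/
def Gl {ℓ : ℕ} (C : GChoices ℓ) : SimpleGraph (BV (h ℓ)) :=
  SimpleGraph.fromRel (fun u v => buRel C.toBUChoices u v ∨ ribRel C u v)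

/-- `s` is a source of `B_ℓ` of rank `a`. -/
def IsSourceOfRank (ℓ s a : ℕ) : Prop :=
  isNode (h ℓ) s ∧ 1 ≤ a ∧ a ≤ ℓ ∧ (nodeDepth s, nodeDepth s + h a - 1) ∈ Nset ℓ

/-- `s` is a source of `B_ℓ`. -/
def IsSource (ℓ s : ℕ) : Prop := isNode (h ℓ) s ∧ ∃ j, (nodeDepth s, j) ∈ Nset ℓ

/-- `t` is an internal node of `B_ℓ(s)`, for `s` a source of rank `a`. -/
def InternalNode (ℓ s a t : ℕ) : Prop :=
  strictAnc s t ∧ nodeDepth t < nodeDepth s + h a - 1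

/-- `t` is a node of the subtree `B_ℓ(s)`, for `s` a source of rank `a`. -/
def SubtreeNode (ℓ s a t : ℕ) : Prop :=
  anc s t ∧ nodeDepth t ≤ nodeDepth s + h a - 1

/-- The set of ranks of sources `s` such that `t` is an internal node of `B_ℓ(s)`. -/
def tauSet (ℓ t : ℕ) : Set ℕ := {a | ∃ s, IsSourceOfRank ℓ s a ∧ InternalNode ℓ s a t}

/-- `τ(u)`: the minimum rank of a source `s` such that `π(u)` is an internal node of
`B_ℓ(s)`, and `ℓ + 1` if there is no such source. -/
noncomputable def tau (ℓ : ℕ) (u : BV (h ℓ)) : ℕ := by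
  classical
  exact if (tauSet ℓ (πn u)).Nonempty then sInf (tauSet ℓ (πn u)) else ℓ + 1

/-- `u` is a vertex incident with the top edge of the clique `K^s`. -/
def TopEdgeVert {ℓ : ℕ} (C : GChoices ℓ) (s : ℕ) (u : BV (h ℓ)) : Prop :=
  ∃ sn x, u = Sum.inl (sn, x) ∧ (sn.1 : ℕ) = s ∧ x ≠ topIdx C.toBUChoices s

/-- `u ∈ pred s`. -/
def InPred {p : ℕ} (s : ℕ) (u : BV p) : Prop := ∃ t j, u = Sum.inr (t, j) ∧ (t.1 : ℕ) = s

/-- `u` and `w` lie in a common clique `K^s`. -/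
def CliquePair {p : ℕ} (u w : BV p) : Prop :=
  ∃ s i j, u = Sum.inl (s, i) ∧ w = Sum.inl (s, j)

/-- `uw` is a tree edge of `G_ℓ`: an edge of the blow-up `H_ℓ` that is not a
clique edge. -/
def IsTreeEdge {ℓ : ℕ} (C : GChoices ℓ) (u w : BV (h ℓ)) : Prop :=
  (blowup C.toBUChoices).Adj u w ∧ ¬ CliquePair u w

/-- The source `s` is `Q`-special for the induced path `Q = v`. -/
def QSpecial {ℓ q : ℕ} (C : GChoices ℓ) (v : Fin q → BV (h ℓ)) (s : ℕ) : Prop :=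
  ∃ a, IsSourceOfRank ℓ s a ∧ (∃ i, TopEdgeVert C s (v i)) ∧
    ∃ j, InternalNode ℓ s a (πn (v j))

end PaperDefs
namespace PaperDefs

-- ===== Section 1 : h =====
lemma h_succ {a : ℕ} (ha : 1 ≤ a) : h (a + 1) = 2 + 2 * h a := by
  match a, ha with
  | n + 1, _ => rfl

lemma h_ge_three {a : ℕ} (ha : 1 ≤ a) : 3 ≤ h a := by
  induction a with
  | zero => omega
  | succ n ih =>
    rcases Nat.eq_or_lt_of_le ha with h1 | h1
    · simp [← h1]; rfl
    · have hn : 1 ≤ n := by omega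
      rw [h_succ hn]; have := ih hn; omega

lemma h_lt_h {a b : ℕ} (ha : 1 ≤ a) (hab : a < b) : h a < h b := by
  induction b with
  | zero => omega
  | succ n ih =>
    have hn : 1 ≤ n := by omega
    rw [h_succ hn]
    rcases Nat.eq_or_lt_of_le (by omega : a ≤ n) with h1 | h1
    · subst h1; have := h_ge_three ha; omega
    · have := ih h1; have := h_ge_three hn; omega

lemma h_inj {a b : ℕ} (ha : 1 ≤ a) (hb : 1 ≤ b) (hab : h a = h b) : a = b := by
  rcases Nat.lt_trichotomy a b with h1 | h1 | h1
  · have := h_lt_h ha h1; omega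
  · exact h1
  · have := h_lt_h hb h1; omega

-- ===== Section 2 : Nset =====
lemma mem_Nset_succ {n x y : ℕ} :
    (x, y) ∈ Nset (n + 2) ↔ (x = 1 ∧ y = h (n + 2)) ∨
      (∃ x' y', (x', y') ∈ Nset (n + 1) ∧ x = x' + 1 ∧ y = y' + 1) ∨
      (∃ x' y', (x', y') ∈ Nset (n + 1) ∧ x = x' + h (n + 1) + 1 ∧ y = y' + h (n + 1) + 1) := by
  show (x, y) ∈ ({((1 : ℕ), h (n+2))} ∪ shift (Nset (n + 1)) 1 ∪
      shift (Nset (n + 1)) (h (n + 1) + 1) : Set (ℕ × ℕ)) ↔ _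
  constructor
  · rintro ((h1 | ⟨⟨x', y'⟩, hm, heq⟩) | ⟨⟨x', y'⟩, hm, heq⟩)
    · left; rw [Set.mem_singleton_iff] at h1; exact ⟨congrArg Prod.fst h1, congrArg Prod.snd h1⟩
    · right; left; exact ⟨x', y', hm, (congrArg Prod.fst heq).symm, (congrArg Prod.snd heq).symm⟩
    · right; right; exact ⟨x', y', hm, (congrArg Prod.fst heq).symm, (congrArg Prod.snd heq).symm⟩
  · rintro (⟨h1, h2⟩ | ⟨x', y', hm, h1, h2⟩ | ⟨x', y', hm, h1, h2⟩)
    · left; left; simp [h1, h2]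
    · left; right; exact ⟨(x', y'), hm, by simp only [Prod.mk.injEq]; omega⟩
    · right; exact ⟨(x', y'), hm, by simp only [Prod.mk.injEq]; omega⟩

lemma Nset_one {x y : ℕ} : (x, y) ∈ Nset 1 ↔ x = 1 ∧ y = 3 := by
  show (x, y) ∈ ({((1:ℕ), (3:ℕ))} : Set (ℕ × ℕ)) ↔ _
  rw [Set.mem_singleton_iff]
  constructor
  · intro hh; exact ⟨congrArg Prod.fst hh, congrArg Prod.snd hh⟩
  · rintro ⟨h1, h2⟩; simp [h1, h2]

lemma Nset_zero {x y : ℕ} : (x, y) ∉ Nset 0 := by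
  show (x, y) ∉ (∅ : Set (ℕ × ℕ)); simp

lemma Nset_rank : ∀ ℓ x y, (x, y) ∈ Nset ℓ →
    ∃ a, 1 ≤ a ∧ a ≤ ℓ ∧ y = x + h a - 1 ∧ 1 ≤ x ∧ y ≤ h ℓ := by
  intro ℓ
  induction ℓ using Nat.strong_induction_on with
  | _ ℓ ih =>
    match ℓ with
    | 0 => intro x y hm; exact absurd hm Nset_zero
    | 1 => intro x y hm; rw [Nset_one] at hm; exact ⟨1, le_refl _, le_refl _, by simp [hm]; rfl, by omega, by rw [hm.2]; rfl⟩
    | n + 2 =>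
      intro x y hm
      rw [mem_Nset_succ] at hm
      have h3 : 3 ≤ h (n + 1) := h_ge_three (by omega)
      have hs : h (n + 2) = 2 + 2 * h (n + 1) := h_succ (by omega)
      rcases hm with ⟨h1, h2⟩ | ⟨x', y', hm', h1, h2⟩ | ⟨x', y', hm', h1, h2⟩
      · exact ⟨n + 2, by omega, le_refl _, by have := h_ge_three (show 1 ≤ n+2 by omega); omega, by omega, by omega⟩
      · obtain ⟨a, ha1, ha2, ha3, ha4, ha5⟩ := ih (n + 1) (by omega) x' y' hm'
        have h3a := h_ge_three ha1
        exact ⟨a, ha1, by omega, by omega, by omega, by omega⟩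
      · obtain ⟨a, ha1, ha2, ha3, ha4, ha5⟩ := ih (n + 1) (by omega) x' y' hm'
        have h3a := h_ge_three ha1
        exact ⟨a, ha1, by omega, by omega, by omega, by omega⟩

/-- Lamination: two intervals of `Nset ℓ` are equal, disjoint, or strictly nested. -/
lemma Nset_lam : ∀ ℓ x y x' y', (x, y) ∈ Nset ℓ → (x', y') ∈ Nset ℓ →
    (x = x' ∧ y = y') ∨ y < x' ∨ y' < x ∨ (x < x' ∧ y' < y) ∨ (x' < x ∧ y < y') := by
  intro ℓ
  induction ℓ using Nat.strong_induction_on with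
  | _ ℓ ih =>
    match ℓ with
    | 0 => intro x y x' y' hm; exact absurd hm Nset_zero
    | 1 => intro x y x' y' hm hm'; rw [Nset_one] at hm hm'; left; omega
    | n + 2 =>
      intro x y x' y' hm hm'
      have h3 : 3 ≤ h (n + 1) := h_ge_three (by omega)
      have hs : h (n + 2) = 2 + 2 * h (n + 1) := h_succ (by omega)
      rw [mem_Nset_succ] at hm hm'
      rcases hm with ⟨h1, h2⟩ | ⟨a', b', hma, h1, h2⟩ | ⟨a', b', hma, h1, h2⟩ <;>
        rcases hm' with ⟨g1, g2⟩ | ⟨c', d', hmc, g1, g2⟩ | ⟨c', d', hmc, g1, g2⟩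
      · left; omega
      · obtain ⟨aa, hb1, hb2, hb3, hb4, hb5⟩ := Nset_rank _ _ _ hmc
        have := h_ge_three hb1; right; right; right; left; omega
      · obtain ⟨aa, hb1, hb2, hb3, hb4, hb5⟩ := Nset_rank _ _ _ hmc
        have := h_ge_three hb1; right; right; right; left; omega
      · obtain ⟨aa, hb1, hb2, hb3, hb4, hb5⟩ := Nset_rank _ _ _ hma
        have := h_ge_three hb1; right; right; right; right; omega
      · have := ih (n + 1) (by omega) a' b' c' d' hma hmc; omega
      · obtain ⟨aa, hb1, hb2, hb3, hb4, hb5⟩ := Nset_rank _ _ _ hma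
        obtain ⟨cc, hc1, hc2, hc3, hc4, hc5⟩ := Nset_rank _ _ _ hmc
        right; left; omega
      · obtain ⟨aa, hb1, hb2, hb3, hb4, hb5⟩ := Nset_rank _ _ _ hma
        have := h_ge_three hb1; right; right; right; right; omega
      · obtain ⟨aa, hb1, hb2, hb3, hb4, hb5⟩ := Nset_rank _ _ _ hmc
        obtain ⟨cc, hc1, hc2, hc3, hc4, hc5⟩ := Nset_rank _ _ _ hma
        right; right; left; omega
      · have := ih (n + 1) (by omega) a' b' c' d' hma hmc; omega

lemma Nset_top : ∀ ℓ, 1 ≤ ℓ → (1, h ℓ) ∈ Nset ℓ := by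
  intro ℓ hl
  match ℓ, hl with
  | 1, _ => rw [Nset_one]; exact ⟨rfl, rfl⟩
  | n + 2, _ => rw [mem_Nset_succ]; left; exact ⟨rfl, rfl⟩

/-- Children: each interval of rank `a ≥ 2` contains its two canonical
rank-`(a-1)` children. -/
lemma Nset_child : ∀ ℓ a x, 2 ≤ a → a ≤ ℓ → (x, x + h a - 1) ∈ Nset ℓ →
    (x + 1, x + h (a - 1)) ∈ Nset ℓ ∧ (x + h (a - 1) + 1, x + 2 * h (a - 1)) ∈ Nset ℓ := by
  intro ℓ
  induction ℓ using Nat.strong_induction_on with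
  | _ ℓ ih =>
    match ℓ with
    | 0 => intro a x _ _ hm; exact absurd hm Nset_zero
    | 1 => intro a x ha2 ha1 hm; omega
    | n + 2 =>
      intro a x ha2 ha1 hm
      have h3 : 3 ≤ h (n + 1) := h_ge_three (by omega)
      have hs : h (n + 2) = 2 + 2 * h (n + 1) := h_succ (by omega)
      have h3a : 3 ≤ h a := h_ge_three (by omega)
      have h3a' : 3 ≤ h (a - 1) := h_ge_three (by omega)
      have hsa : h a = 2 + 2 * h (a - 1) := by
        have := h_succ (show 1 ≤ a - 1 by omega)
        have hh : a - 1 + 1 = a := by omega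
        rwa [hh] at this
      rw [mem_Nset_succ] at hm
      rcases hm with ⟨h1, h2⟩ | ⟨x', y', hm', h1, h2⟩ | ⟨x', y', hm', h1, h2⟩
      · -- the top interval: a = n + 2
        have haeq : a = n + 2 := by
          have : h a = h (n + 2) := by omega
          exact h_inj (by omega) (by omega) this
        have htop : (1, h (n + 1)) ∈ Nset (n + 1) := Nset_top _ (by omega)
        have han : h (a - 1) = h (n + 1) := by rw [haeq]; simp
        constructor
        · rw [mem_Nset_succ]; right; left
          exact ⟨1, h (n + 1), htop, by omega, by omega⟩
        · rw [mem_Nset_succ]; right; right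
          exact ⟨1, h (n + 1), htop, by omega, by omega⟩
      · -- shifted by 1
        obtain ⟨aa, hb1, hb2, hb3, hb4, hb5⟩ := Nset_rank _ _ _ hm'
        have haa : aa = a := by
          have : h aa = h a := by omega
          exact h_inj hb1 (by omega) this
        subst haa
        have hm'' : (x', x' + h aa - 1) ∈ Nset (n + 1) := by
          have : y' = x' + h aa - 1 := hb3
          rwa [this] at hm'
        obtain ⟨hc1, hc2⟩ := ih (n + 1) (by omega) aa x' ha2 (by omega) hm''
        constructor
        · rw [mem_Nset_succ]; right; left
          exact ⟨x' + 1, x' + h (aa - 1), hc1, by omega, by omega⟩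
        · rw [mem_Nset_succ]; right; left
          exact ⟨x' + h (aa - 1) + 1, x' + 2 * h (aa - 1), hc2, by omega, by omega⟩
      · -- shifted by h (n+1) + 1
        obtain ⟨aa, hb1, hb2, hb3, hb4, hb5⟩ := Nset_rank _ _ _ hm'
        have haa : aa = a := by
          have : h aa = h a := by omega
          exact h_inj hb1 (by omega) this
        subst haa
        have hm'' : (x', x' + h aa - 1) ∈ Nset (n + 1) := by
          have : y' = x' + h aa - 1 := hb3
          rwa [this] at hm'
        obtain ⟨hc1, hc2⟩ := ih (n + 1) (by omega) aa x' ha2 (by omega) hm''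
        constructor
        · rw [mem_Nset_succ]; right; right
          exact ⟨x' + 1, x' + h (aa - 1), hc1, by omega, by omega⟩
        · rw [mem_Nset_succ]; right; right
          exact ⟨x' + h (aa - 1) + 1, x' + 2 * h (aa - 1), hc2, by omega, by omega⟩

/-- Parent: each interval of rank `a < ℓ` is strictly contained in an
interval of rank `a + 1`. -/
lemma Nset_parent : ∀ ℓ a x, 1 ≤ a → a < ℓ → (x, x + h a - 1) ∈ Nset ℓ →
    ∃ x', (x', x' + h (a + 1) - 1) ∈ Nset ℓ ∧ x' < x ∧
      x + h a - 1 < x' + h (a + 1) - 1 := by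
  intro ℓ
  induction ℓ using Nat.strong_induction_on with
  | _ ℓ ih =>
    match ℓ with
    | 0 => intro a x _ _ hm; exact absurd hm Nset_zero
    | 1 => intro a x ha1 ha2 hm; omega
    | n + 2 =>
      intro a x ha1 ha2 hm
      have h3 : 3 ≤ h (n + 1) := h_ge_three (by omega)
      have hs : h (n + 2) = 2 + 2 * h (n + 1) := h_succ (by omega)
      have h3a : 3 ≤ h a := h_ge_three (by omega)
      have h3a' : 3 ≤ h (a + 1) := h_ge_three (by omega)
      have hsa : h (a + 1) = 2 + 2 * h a := h_succ ha1
      rw [mem_Nset_succ] at hm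
      rcases hm with ⟨h1, h2⟩ | ⟨x', y', hm', h1, h2⟩ | ⟨x', y', hm', h1, h2⟩
      · exfalso
        have : a = n + 2 := h_inj (by omega) (by omega) (by omega : h a = h (n + 2))
        omega
      · obtain ⟨aa, hb1, hb2, hb3, hb4, hb5⟩ := Nset_rank _ _ _ hm'
        have haa : aa = a := h_inj hb1 ha1 (by omega : h aa = h a)
        subst haa
        rcases Nat.eq_or_lt_of_le hb2 with he | hlt
        · -- x' interval is the top of Nset (n+1): parent is the global top
          have hx1 : x' = 1 := by
            rw [he] at hb3; omega
          refine ⟨1, ?_, by omega, ?_⟩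
          · rw [mem_Nset_succ]; left
            constructor
            · rfl
            · have : h (aa + 1) = h (n + 2) := by rw [he]
              omega
          · have : h (aa + 1) = h (n + 2) := by rw [he]
            omega
        · have hm'' : (x', x' + h aa - 1) ∈ Nset (n + 1) := by
            have : y' = x' + h aa - 1 := hb3
            rwa [this] at hm'
          obtain ⟨x'', hx1, hx2, hx3⟩ := ih (n + 1) (by omega) aa x' ha1 (by omega) hm''
          refine ⟨x'' + 1, ?_, by omega, by omega⟩
          rw [mem_Nset_succ]; right; left
          exact ⟨x'', x'' + h (aa + 1) - 1, hx1, rfl, by omega⟩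
      · obtain ⟨aa, hb1, hb2, hb3, hb4, hb5⟩ := Nset_rank _ _ _ hm'
        have haa : aa = a := h_inj hb1 ha1 (by omega : h aa = h a)
        subst haa
        rcases Nat.eq_or_lt_of_le hb2 with he | hlt
        · have hx1 : x' = 1 := by
            rw [he] at hb3; omega
          refine ⟨1, ?_, by omega, ?_⟩
          · rw [mem_Nset_succ]; left
            constructor
            · rfl
            · have : h (aa + 1) = h (n + 2) := by rw [he]
              omega
          · have : h (aa + 1) = h (n + 2) := by rw [he]
            omega
        · have hm'' : (x', x' + h aa - 1) ∈ Nset (n + 1) := by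
            have : y' = x' + h aa - 1 := hb3
            rwa [this] at hm'
          obtain ⟨x'', hx1, hx2, hx3⟩ := ih (n + 1) (by omega) aa x' ha1 (by omega) hm''
          refine ⟨x'' + h (n + 1) + 1, ?_, by omega, by omega⟩
          rw [mem_Nset_succ]; right; right
          exact ⟨x'', x'' + h (aa + 1) - 1, hx1, rfl, by omega⟩

-- ===== Section 3 : heap arithmetic =====
lemma log2_div_pow (n k : ℕ) : Nat.log 2 (n / 2 ^ k) = Nat.log 2 n - k := by
  induction k with
  | zero => simp
  | succ m ihm =>
    have : n / 2 ^ (m + 1) = n / 2 ^ m / 2 := by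
      rw [Nat.div_div_eq_div_mul, pow_succ]
    rw [this, Nat.log_div_base, ihm]
    omega

lemma le_log2 {n k : ℕ} (hn : 2 ^ k ≤ n) : k ≤ Nat.log 2 n := by
  have hp : 0 < 2 ^ k := by positivity
  exact (Nat.le_log_iff_pow_le (by norm_num) (by omega)).mpr hn

lemma nodeDepth_div_pow {n k : ℕ} (hk : 1 ≤ n / 2 ^ k) :
    nodeDepth (n / 2 ^ k) = nodeDepth n - k := by
  have h1 : 2 ^ k ≤ n := by
    by_contra hc
    push_neg at hc
    rw [Nat.div_eq_of_lt hc] at hk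
    omega
  have h2 : k ≤ Nat.log 2 n := le_log2 h1
  unfold nodeDepth
  rw [log2_div_pow]
  omega

lemma nodeDepth_pos (n : ℕ) : 1 ≤ nodeDepth n := by unfold nodeDepth; omega

lemma nodeDepth_le {n p : ℕ} (h1 : 1 ≤ n) (h2 : n < 2 ^ p) : nodeDepth n ≤ p := by
  have := Nat.log_lt_of_lt_pow (show n ≠ 0 by omega) h2
  unfold nodeDepth; omega

lemma strictAnc_depth {s t : ℕ} (hs : 1 ≤ s) (ha : strictAnc s t) :
    nodeDepth s < nodeDepth t ∧ t / 2 ^ (nodeDepth t - nodeDepth s) = s := by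
  obtain ⟨k, hk1, hk2⟩ := ha
  have hs' : 1 ≤ t / 2 ^ k := by rw [hk2]; omega
  have hd := nodeDepth_div_pow hs'
  rw [hk2] at hd
  have h2k : 2 ^ k ≤ t := by
    by_contra hc
    push_neg at hc
    rw [Nat.div_eq_of_lt hc] at hk2
    omega
  have hkl : k ≤ Nat.log 2 t := le_log2 h2k
  have hdt : nodeDepth t = Nat.log 2 t + 1 := rfl
  have hds : nodeDepth s = Nat.log 2 t + 1 - k := by omega
  constructor
  · have h2 : 2 ^ 1 ≤ 2 ^ k := Nat.pow_le_pow_right (by norm_num) hk1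
    omega
  · have : nodeDepth t - nodeDepth s = k := by omega
    rw [this, hk2]

/-- Construct the ancestor of `t` at depth `i`. -/
lemma anc_exists {t i p : ℕ} (ht1 : 1 ≤ t) (ht2 : t < 2 ^ p) (hi1 : 1 ≤ i)
    (hi2 : i < nodeDepth t) :
    ∃ s, 1 ≤ s ∧ s < 2 ^ p ∧ nodeDepth s = i ∧ t / 2 ^ (nodeDepth t - i) = s ∧
      strictAnc s t := by
  set k := nodeDepth t - i with hkdef
  have hdt : nodeDepth t = Nat.log 2 t + 1 := rfl
  have hkl : k ≤ Nat.log 2 t := by omega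
  have hpk : 2 ^ k ≤ 2 ^ Nat.log 2 t := Nat.pow_le_pow_right (by norm_num) hkl
  have hpl : 2 ^ Nat.log 2 t ≤ t := Nat.pow_log_le_self 2 (by omega)
  have hs1 : 1 ≤ t / 2 ^ k := by
    rw [Nat.one_le_div_iff (by positivity)]
    omega
  refine ⟨t / 2 ^ k, hs1, ?_, ?_, rfl, ⟨k, by omega, rfl⟩⟩
  · calc t / 2 ^ k ≤ t := Nat.div_le_self _ _
      _ < 2 ^ p := ht2
  · rw [nodeDepth_div_pow hs1]; omega

lemma nodeDepth_half {t : ℕ} (ht : 2 ≤ t) : nodeDepth (t / 2) + 1 = nodeDepth t := by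
  have h1 : 1 ≤ t / 2 ^ 1 := by
    rw [Nat.one_le_div_iff (by norm_num)]; omega
  have := nodeDepth_div_pow (n := t) (k := 1) h1
  have hl : 1 ≤ Nat.log 2 t := le_log2 (by omega : 2 ^ 1 ≤ t)
  have hdt : nodeDepth t = Nat.log 2 t + 1 := rfl
  have ht2 : t / 2 ^ 1 = t / 2 := by norm_num
  rw [ht2] at this
  omega

-- ===== Section 4 : depth-indexed tau =====
lemma h_le {a b : ℕ} (ha : 1 ≤ a) (hab : a ≤ b) : h a ≤ h b := by
  rcases Nat.eq_or_lt_of_le hab with h1 | h1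
  · rw [h1]
  · exact le_of_lt (h_lt_h ha h1)

/-- The set of ranks of intervals strictly containing depth `d`. -/
def SD (ℓ d : ℕ) : Set ℕ :=
  {a | ∃ i, 1 ≤ a ∧ a ≤ ℓ ∧ (i, i + h a - 1) ∈ Nset ℓ ∧ i < d ∧ d < i + h a - 1}

/-- `tau` as a function of the depth. -/
noncomputable def fd (ℓ d : ℕ) : ℕ := by
  classical exact if (SD ℓ d).Nonempty then sInf (SD ℓ d) else ℓ + 1

lemma pin_valid {p : ℕ} (u : BV p) : 1 ≤ πn u ∧ πn u < 2 ^ p := by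
  match u with
  | Sum.inl (s, i) => exact ⟨s.2, s.1.2⟩
  | Sum.inr (t, j) => exact ⟨le_trans one_le_two t.2, t.1.2⟩

lemma tauSet_eq {ℓ t : ℕ} (ht1 : 1 ≤ t) (ht2 : t < 2 ^ h ℓ) :
    tauSet ℓ t = SD ℓ (nodeDepth t) := by
  ext a
  constructor
  · rintro ⟨s, ⟨hnode, ha1, ha2, hmem⟩, hanc, hdep⟩
    have hd := strictAnc_depth hnode.1 hanc
    exact ⟨nodeDepth s, ha1, ha2, hmem, hd.1, hdep⟩
  · rintro ⟨i, ha1, ha2, hmem, hd1, hd2⟩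
    obtain ⟨aa, hb1, hb2, hb3, hb4, hb5⟩ := Nset_rank _ _ _ hmem
    obtain ⟨s, hs1, hs2, hs3, _, hs5⟩ := anc_exists ht1 ht2 (by omega) hd1
    exact ⟨s, ⟨⟨hs1, hs2⟩, ha1, ha2, by rwa [hs3]⟩, hs5, by rwa [hs3]⟩

lemma tau_eq_fd {ℓ : ℕ} (u : BV (h ℓ)) : tau ℓ u = fd ℓ (nodeDepth (πn u)) := by
  have hv := pin_valid u
  have he := tauSet_eq (ℓ := ℓ) hv.1 hv.2
  unfold tau fd
  rw [he]

lemma fd_empty {ℓ d : ℕ} (hne : ¬ (SD ℓ d).Nonempty) : fd ℓ d = ℓ + 1 := by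
  unfold fd; rw [if_neg hne]

lemma fd_mem {ℓ d : ℕ} (hne : (SD ℓ d).Nonempty) :
    fd ℓ d ∈ SD ℓ d ∧ ∀ b ∈ SD ℓ d, fd ℓ d ≤ b := by
  unfold fd; rw [if_pos hne]
  exact ⟨Nat.sInf_mem hne, fun b hb => Nat.sInf_le hb⟩

lemma fd_le {ℓ d a i : ℕ} (ha1 : 1 ≤ a) (ha2 : a ≤ ℓ)
    (hmem : (i, i + h a - 1) ∈ Nset ℓ) (h1 : i < d) (h2 : d < i + h a - 1) :
    fd ℓ d ≤ a := by
  have hm : a ∈ SD ℓ d := ⟨i, ha1, ha2, hmem, h1, h2⟩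
  exact (fd_mem ⟨a, hm⟩).2 a hm

/-- A depth strictly inside an interval of rank `c` is not an endpoint of an
interval of rank `b ≥ c`; contrapositive form: ranks below `b + 1` don't
strictly contain endpoints. -/
lemma SD_endpoint_lb {ℓ b i c : ℕ} (hb1 : 1 ≤ b) (hb2 : b ≤ ℓ)
    (hmem : (i, i + h b - 1) ∈ Nset ℓ) {e : ℕ} (he : e = i ∨ e = i + h b - 1)
    (hc : c ∈ SD ℓ e) : b + 1 ≤ c := by
  obtain ⟨x, hc1, hc2, hcm, hx1, hx2⟩ := hc
  have h3b := h_ge_three hb1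
  have h3c := h_ge_three hc1
  have hlam := Nset_lam ℓ i (i + h b - 1) x (x + h c - 1) hmem hcm
  by_contra hlt
  push_neg at hlt
  have hhc : h c ≤ h b := h_le hc1 (by omega)
  omega

lemma fd_endpoint {ℓ b i : ℕ} (hb1 : 1 ≤ b) (hb2 : b ≤ ℓ)
    (hmem : (i, i + h b - 1) ∈ Nset ℓ) :
    fd ℓ i = b + 1 ∧ fd ℓ (i + h b - 1) = b + 1 := by
  have h3b := h_ge_three hb1
  obtain ⟨aa, hb1', hb2', hb3', hb4', hb5'⟩ := Nset_rank _ _ _ hmem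
  rcases Nat.eq_or_lt_of_le hb2 with heq | hlt
  · -- b = ℓ : both endpoints have empty SD
    subst heq
    have hi1 : i = 1 := by omega
    constructor
    · apply fd_empty
      rintro ⟨c, x, hc1, hc2, hcm, hx1, hx2⟩
      obtain ⟨cc, _, _, _, hcc4, _⟩ := Nset_rank _ _ _ hcm
      omega
    · apply fd_empty
      rintro ⟨c, x, hc1, hc2, hcm, hx1, hx2⟩
      obtain ⟨cc, hd1, hd2, hd3, hd4, hd5⟩ := Nset_rank _ _ _ hcm
      have : h cc = h c := by
        have := h_ge_three hc1
        omega
      have : cc = c := h_inj hd1 hc1 this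
      subst this
      omega
  · -- b < ℓ : use the parent interval
    obtain ⟨x', hp1, hp2, hp3⟩ := Nset_parent ℓ b i hb1 hlt hmem
    have h3b1 := h_ge_three (show 1 ≤ b + 1 by omega)
    have hmi : (b + 1) ∈ SD ℓ i := ⟨x', by omega, by omega, hp1, hp2, by omega⟩
    have hmj : (b + 1) ∈ SD ℓ (i + h b - 1) := ⟨x', by omega, by omega, hp1, by omega, by omega⟩
    constructor
    · have hf := fd_mem ⟨_, hmi⟩
      have hub := hf.2 _ hmi
      have hlb := SD_endpoint_lb hb1 hb2 hmem (Or.inl rfl) hf.1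
      omega
    · have hf := fd_mem ⟨_, hmj⟩
      have hub := hf.2 _ hmj
      have hlb := SD_endpoint_lb hb1 hb2 hmem (Or.inr rfl) hf.1
      omega

lemma fd_four {ℓ a d : ℕ} (ha2 : 2 ≤ a) (hal : a ≤ ℓ) (hfd : fd ℓ d = a) :
    ∃ i, (i, i + h a - 1) ∈ Nset ℓ ∧ i < d ∧ d < i + h a - 1 ∧
      (d = i + 1 ∨ d = i + h (a - 1) ∨ d = i + h (a - 1) + 1 ∨ d = i + 2 * h (a - 1)) := by
  have hne : (SD ℓ d).Nonempty := by
    by_contra hc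
    have := fd_empty (ℓ := ℓ) (d := d) hc
    omega
  obtain ⟨hmem, hmin⟩ := fd_mem hne
  rw [hfd] at hmem
  obtain ⟨i, _, _, hint, hd1, hd2⟩ := hmem
  obtain ⟨hc1, hc2⟩ := Nset_child ℓ a i ha2 hal hint
  have h3a' := h_ge_three (show 1 ≤ a - 1 by omega)
  have hsa : h a = 2 + 2 * h (a - 1) := by
    have := h_succ (show 1 ≤ a - 1 by omega)
    have hh : a - 1 + 1 = a := by omega
    rwa [hh] at this
  have hn1 : ¬ (i + 1 < d ∧ d < i + h (a - 1)) := by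
    rintro ⟨hh1, hh2⟩
    have : (a - 1) ∈ SD ℓ d := by
      refine ⟨i + 1, by omega, by omega, ?_, by omega, by omega⟩
      have he : i + 1 + h (a - 1) - 1 = i + h (a - 1) := by omega
      rwa [he]
    have := hmin _ this
    omega
  have hn2 : ¬ (i + h (a - 1) + 1 < d ∧ d < i + 2 * h (a - 1)) := by
    rintro ⟨hh1, hh2⟩
    have : (a - 1) ∈ SD ℓ d := by
      refine ⟨i + h (a - 1) + 1, by omega, by omega, ?_, by omega, by omega⟩
      have he : i + h (a - 1) + 1 + h (a - 1) - 1 = i + 2 * h (a - 1) := by omega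
      rwa [he]
    have := hmin _ this
    omega
  exact ⟨i, hint, hd1, hd2, by omega⟩

lemma fd_one {ℓ d : ℕ} (hl : 1 ≤ ℓ) (hfd : fd ℓ d = 1) :
    ∃ i, (i, i + h 1 - 1) ∈ Nset ℓ ∧ d = i + 1 := by
  have hne : (SD ℓ d).Nonempty := by
    by_contra hc
    have := fd_empty (ℓ := ℓ) (d := d) hc
    omega
  obtain ⟨hmem, _⟩ := fd_mem hne
  rw [hfd] at hmem
  obtain ⟨i, _, _, hint, hd1, hd2⟩ := hmem
  have hh1 : h 1 = 3 := rfl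
  exact ⟨i, hint, by omega⟩

lemma fd_top {ℓ d : ℕ} (hl : 1 ≤ ℓ) (hfd : fd ℓ d = ℓ + 1) (hd1 : 1 ≤ d)
    (hd2 : d ≤ h ℓ) : d = 1 ∨ d = h ℓ := by
  by_contra hc
  push_neg at hc
  have h3 := h_ge_three hl
  have : ℓ ∈ SD ℓ d := by
    refine ⟨1, hl, le_refl _, ?_, by omega, by omega⟩
    have he : 1 + h ℓ - 1 = h ℓ := by omega
    rw [he]
    exact Nset_top ℓ hl
  have := (fd_mem ⟨_, this⟩).2 _ this
  omega

-- ===== Section 5 : levels =====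
lemma fd_bounds (ℓ d : ℕ) : 1 ≤ fd ℓ d ∧ fd ℓ d ≤ ℓ + 1 := by
  by_cases hne : (SD ℓ d).Nonempty
  · obtain ⟨hmem, _⟩ := fd_mem hne
    obtain ⟨i, h1, h2, _, _, _⟩ := hmem
    omega
  · rw [fd_empty hne]; omega

/-- Virtual intervals of rank `a`: the true ones, plus for rank `ℓ+1` a
virtual interval starting at 0. -/
def VMem (ℓ a i : ℕ) : Prop :=
  (1 ≤ a ∧ a ≤ ℓ ∧ (i, i + h a - 1) ∈ Nset ℓ) ∨ (a = ℓ + 1 ∧ i = 0)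

lemma VMem_unique {ℓ a i i' d : ℕ} (hi : VMem ℓ a i) (hi' : VMem ℓ a i')
    (h1 : i < d) (h2 : d < i + h a - 1) (h3 : i' < d) (h4 : d < i' + h a - 1) :
    i = i' := by
  rcases hi with ⟨ha1, ha2, hm⟩ | ⟨ha1, ha2⟩ <;> rcases hi' with ⟨hb1, hb2, hm'⟩ | ⟨hb1, hb2⟩
  · have h3a := h_ge_three ha1
    have := Nset_lam ℓ i (i + h a - 1) i' (i' + h a - 1) hm hm'
    omega
  · omega
  · omega
  · omega

noncomputable def Lv (ℓ a d : ℕ) : ℕ := by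
  classical exact
    if hd : ∃ i, VMem ℓ a i ∧ i < d ∧ d < i + h a - 1 then
      (if d = hd.choose + 1 then 0 else if d = hd.choose + h (a - 1) then 1
       else if d = hd.choose + h (a - 1) + 1 then 2 else 3)
    else 0

lemma Lv_lt_four (ℓ a d : ℕ) : Lv ℓ a d < 4 := by
  unfold Lv
  split_ifs <;> omega

lemma Lv_eq {ℓ a d i : ℕ} (hi : VMem ℓ a i) (h1 : i < d) (h2 : d < i + h a - 1) :
    Lv ℓ a d = if d = i + 1 then 0 else if d = i + h (a - 1) then 1
      else if d = i + h (a - 1) + 1 then 2 else 3 := by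
  unfold Lv
  have hd : ∃ j, VMem ℓ a j ∧ j < d ∧ d < j + h a - 1 := ⟨i, hi, h1, h2⟩
  rw [dif_pos hd]
  obtain ⟨hc1, hc2, hc3⟩ := hd.choose_spec
  have : hd.choose = i := VMem_unique hc1 hi hc2 hc3 h1 h2
  rw [this]

noncomputable def parP (ℓ a n : ℕ) : ℕ :=
  if Lv ℓ a (nodeDepth n) = 2 then n / 2 else n / 2 ^ (h (a - 1) - 1)

/-- Tree steps: if `d` and `d+1` both have `fd`-value `a`, they are the two
middle depths of a rank-`a` interval. -/
lemma step_tree {ℓ a d : ℕ} (hl : 1 ≤ ℓ) (hd1 : 1 ≤ d) (hd2 : d + 1 ≤ h ℓ)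
    (hfd : fd ℓ d = a) (hfd' : fd ℓ (d + 1) = a) :
    Lv ℓ a d = 1 ∧ Lv ℓ a (d + 1) = 2 := by
  have hb := fd_bounds ℓ d
  have h3l := h_ge_three hl
  rcases Nat.lt_or_ge a (ℓ + 1) with hal | hal
  · -- a ≤ ℓ
    rcases Nat.lt_or_ge 1 a with ha2 | ha2
    · -- 2 ≤ a ≤ ℓ
      have h3a' := h_ge_three (show 1 ≤ a - 1 by omega)
      have hsa : h a = 2 + 2 * h (a - 1) := by
        have := h_succ (show 1 ≤ a - 1 by omega)
        have hh : a - 1 + 1 = a := by omega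
        rwa [hh] at this
      obtain ⟨i, hint, hq1, hq2, hq3⟩ := fd_four ha2 (by omega) hfd
      obtain ⟨i', hint', hr1, hr2, hr3⟩ := fd_four ha2 (by omega) hfd'
      have hii : i = i' := by
        have := Nset_lam ℓ i (i + h a - 1) i' (i' + h a - 1) hint hint'
        omega
      subst hii
      have hdd : d = i + h (a - 1) := by omega
      have hvm : VMem ℓ a i := Or.inl ⟨by omega, by omega, hint⟩
      constructor
      · rw [Lv_eq hvm hq1 hq2, if_neg (by omega), if_pos (by omega)]
      · rw [Lv_eq hvm hr1 hr2, if_neg (by omega), if_neg (by omega), if_pos (by omega)]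
    · -- a = 1
      have ha1 : a = 1 := by omega
      subst ha1
      obtain ⟨i, hint, hq⟩ := fd_one hl hfd
      obtain ⟨i', hint', hr⟩ := fd_one hl hfd'
      have hh1 : h 1 = 3 := rfl
      have := Nset_lam ℓ i (i + h 1 - 1) i' (i' + h 1 - 1) hint hint'
      omega
  · -- a = ℓ + 1 : impossible
    have ha : a = ℓ + 1 := by omega
    subst ha
    have h1 := fd_top hl hfd hd1 (by omega)
    have h2 := fd_top hl hfd' (by omega) hd2
    omega

/-- Rib steps: if the two endpoint depths of an interval of `Nset ℓ` both have
`fd`-value `a`, the interval is a "child" interval of rank `a - 1`. -/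
lemma step_rib {ℓ a x y : ℕ} (hl : 1 ≤ ℓ) (hmem : (x, y) ∈ Nset ℓ)
    (hfx : fd ℓ x = a) (hfy : fd ℓ y = a) :
    ((Lv ℓ a x = 0 ∧ Lv ℓ a y = 1) ∨ (Lv ℓ a x = 2 ∧ Lv ℓ a y = 3)) ∧
      y = x + h (a - 1) - 1 ∧ 2 ≤ a := by
  obtain ⟨b, hb1, hb2, hb3, hb4, hb5⟩ := Nset_rank _ _ _ hmem
  have h3b := h_ge_three hb1
  have hmem' : (x, x + h b - 1) ∈ Nset ℓ := by rwa [hb3] at hmem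
  have hend := fd_endpoint hb1 hb2 hmem'
  have hax : a = b + 1 := by rw [← hfx, hend.1]
  have hya : fd ℓ (x + h b - 1) = a := by rwa [hb3] at hfy
  have hab : b = a - 1 := by omega
  rcases Nat.lt_or_ge b ℓ with hbl | hbl
  · -- 2 ≤ a ≤ ℓ : real containing interval
    have ha2 : 2 ≤ a := by omega
    have hal : a ≤ ℓ := by omega
    have h3a' := h_ge_three (show 1 ≤ a - 1 by omega)
    have hsa : h a = 2 + 2 * h (a - 1) := by
      have := h_succ (show 1 ≤ a - 1 by omega)
      have hh : a - 1 + 1 = a := by omega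
      rwa [hh] at this
    obtain ⟨i, hint, hq1, hq2, hq3⟩ := fd_four ha2 hal hfx
    obtain ⟨hc1, hc2⟩ := Nset_child ℓ a i ha2 hal hint
    have hvm : VMem ℓ a i := Or.inl ⟨by omega, hal, hint⟩
    have hch1 : (i + 1, i + h (a - 1)) ∈ Nset ℓ := hc1
    have hch2 : (i + h (a - 1) + 1, i + 2 * h (a - 1)) ∈ Nset ℓ := hc2
    rcases hq3 with hx | hx | hx | hx
    · -- x = i + 1 : J = child1
      have hlam := Nset_lam ℓ x y (i + 1) (i + h (a - 1)) hmem hch1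
      have hyv : y = i + h (a - 1) := by omega
      have hy1 : i < y := by omega
      have hy2 : y < i + h a - 1 := by omega
      refine ⟨Or.inl ⟨?_, ?_⟩, by omega, ha2⟩
      · rw [Lv_eq hvm hq1 hq2, if_pos (by omega)]
      · rw [Lv_eq hvm hy1 hy2, if_neg (by omega), if_pos (by omega)]
    · -- x = i + h (a-1) : impossible
      exfalso
      have hlam := Nset_lam ℓ x y (i + 1) (i + h (a - 1)) hmem hch1
      omega
    · -- x = i + h (a-1) + 1 : J = child2
      have hlam := Nset_lam ℓ x y (i + h (a - 1) + 1) (i + 2 * h (a - 1)) hmem hch2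
      have hyv : y = i + 2 * h (a - 1) := by omega
      have hy1 : i < y := by omega
      have hy2 : y < i + h a - 1 := by omega
      refine ⟨Or.inr ⟨?_, ?_⟩, by omega, ha2⟩
      · rw [Lv_eq hvm hq1 hq2, if_neg (by omega), if_neg (by omega), if_pos (by omega)]
      · rw [Lv_eq hvm hy1 hy2, if_neg (by omega), if_neg (by omega), if_neg (by omega)]
    · -- x = i + 2 h (a-1) : impossible
      exfalso
      have hlam := Nset_lam ℓ x y (i + h (a - 1) + 1) (i + 2 * h (a - 1)) hmem hch2
      omega
  · -- b = ℓ : a = ℓ + 1, virtual interval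
    have hbe : b = ℓ := by omega
    have hhb : h b = h ℓ := by rw [hbe]
    have hx1 : x = 1 := by omega
    have hax' : a = ℓ + 1 := by omega
    have hvm : VMem ℓ a 0 := Or.inr ⟨hax', rfl⟩
    have hsa : h a = 2 + 2 * h b := by rw [hax]; exact h_succ hb1
    have hha : h (a - 1) = h b := by rw [hab]
    have hyv : y = h b := by omega
    refine ⟨Or.inl ⟨?_, ?_⟩, by omega, by omega⟩
    · rw [Lv_eq hvm (by omega) (by omega), if_pos (by omega)]
    · rw [Lv_eq hvm (by omega) (by omega), if_neg (by omega), if_pos (by omega)]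

-- ===== Section 6 : adjacency classification =====
lemma rel_cases {ℓ : ℕ} (C : GChoices ℓ) {u w : BV (h ℓ)}
    (hr : buRel C.toBUChoices u w ∨ ribRel C u w) :
    πn u = πn w ∨ (πn u = πn w / 2 ∧ 2 ≤ πn w) ∨
      (strictAnc (πn u) (πn w) ∧ (nodeDepth (πn u), nodeDepth (πn w)) ∈ Nset ℓ) := by
  rcases u with ⟨s, i⟩ | ⟨t, j⟩ <;> rcases w with ⟨s', i'⟩ | ⟨t', j'⟩
  · rcases hr with ⟨hss, _⟩ | hrib
    · left; simp only [πn]; rw [hss]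
    · exact absurd hrib (by simp [ribRel])
  · rcases hr with hbu | hrib
    · simp only [buRel] at hbu
      rcases hbu with ⟨hst, _⟩ | ⟨hst, _⟩
      · right; left; exact ⟨hst, t'.2⟩
      · left; exact hst
    · simp only [ribRel] at hrib
      right; right; exact ⟨hrib.1, hrib.2.1⟩
  · rcases hr with hbu | hrib
    · simp only [buRel] at hbu
    · simp only [ribRel] at hrib
  · rcases hr with ⟨htt, _⟩ | hrib
    · left; simp only [πn]; rw [htt]
    · exact absurd hrib (by simp [ribRel])

lemma Gl_adj_cases {ℓ : ℕ} (C : GChoices ℓ) {u w : BV (h ℓ)} (hadj : (Gl C).Adj u w) :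
    πn u = πn w ∨
      ((πn u = πn w / 2 ∧ 2 ≤ πn w) ∨
        (strictAnc (πn u) (πn w) ∧ (nodeDepth (πn u), nodeDepth (πn w)) ∈ Nset ℓ)) ∨
      ((πn w = πn u / 2 ∧ 2 ≤ πn u) ∨
        (strictAnc (πn w) (πn u) ∧ (nodeDepth (πn w), nodeDepth (πn u)) ∈ Nset ℓ)) := by
  rw [Gl, SimpleGraph.fromRel_adj] at hadj
  rcases hadj.2 with h1 | h1
  · rcases rel_cases C h1 with h2 | h2 | h2
    · exact Or.inl h2
    · exact Or.inr (Or.inl (Or.inl h2))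
    · exact Or.inr (Or.inl (Or.inr h2))
  · rcases rel_cases C h1 with h2 | h2 | h2
    · exact Or.inl h2.symm
    · exact Or.inr (Or.inr (Or.inl h2))
    · exact Or.inr (Or.inr (Or.inr h2))

/-- The concrete step lemma: an edge of `G_ℓ` between two vertices of the same
`tau`-value `a` either stays in a node, or moves between a node and its
"region parent". -/
lemma Gl_step {ℓ : ℕ} (hl : 1 ≤ ℓ) (C : GChoices ℓ) {u w : BV (h ℓ)}
    (hadj : (Gl C).Adj u w) {a : ℕ} (hu : tau ℓ u = a) (hw : tau ℓ w = a) :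
    πn u = πn w ∨
      (parP ℓ a (πn w) = πn u ∧
        Lv ℓ a (nodeDepth (πn w)) = Lv ℓ a (nodeDepth (πn u)) + 1) ∨
      (parP ℓ a (πn u) = πn w ∧
        Lv ℓ a (nodeDepth (πn u)) = Lv ℓ a (nodeDepth (πn w)) + 1) := by
  have hfu : fd ℓ (nodeDepth (πn u)) = a := by rw [← tau_eq_fd]; exact hu
  have hfw : fd ℓ (nodeDepth (πn w)) = a := by rw [← tau_eq_fd]; exact hw
  have hvu := pin_valid u
  have hvw := pin_valid w
  have key : ∀ x y : BV (h ℓ),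
      fd ℓ (nodeDepth (πn x)) = a → fd ℓ (nodeDepth (πn y)) = a →
      ((πn x = πn y / 2 ∧ 2 ≤ πn y) ∨
        (strictAnc (πn x) (πn y) ∧ (nodeDepth (πn x), nodeDepth (πn y)) ∈ Nset ℓ)) →
      parP ℓ a (πn y) = πn x ∧
        Lv ℓ a (nodeDepth (πn y)) = Lv ℓ a (nodeDepth (πn x)) + 1 := by
    intro x y hfx hfy hcase
    have hvx := pin_valid x
    have hvy := pin_valid y
    rcases hcase with ⟨hhalf, h2y⟩ | ⟨hanc, hmem⟩
    · -- tree edge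
      have hdep : nodeDepth (πn x) + 1 = nodeDepth (πn y) := by
        rw [hhalf]; exact nodeDepth_half h2y
      have hdy : nodeDepth (πn y) ≤ h ℓ := nodeDepth_le hvy.1 hvy.2
      have hst := step_tree hl (nodeDepth_pos (πn x)) (by omega)
        hfx (by rw [hdep]; exact hfy)
      rw [hdep] at hst
      refine ⟨?_, by omega⟩
      unfold parP
      rw [if_pos hst.2, hhalf]
    · -- rib edge
      have hsr := step_rib hl hmem hfx hfy
      obtain ⟨hlv, hdiff, ha2⟩ := hsr
      have h3a' := h_ge_three (show 1 ≤ a - 1 by omega)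
      have hsd := strictAnc_depth hvx.1 hanc
      have hk : nodeDepth (πn y) - nodeDepth (πn x) = h (a - 1) - 1 := by omega
      have hpar : πn y / 2 ^ (h (a - 1) - 1) = πn x := by rw [← hk]; exact hsd.2
      have hlvy : Lv ℓ a (nodeDepth (πn y)) ≠ 2 := by
        rcases hlv with ⟨_, hh⟩ | ⟨_, hh⟩ <;> omega
      refine ⟨?_, by rcases hlv with ⟨h1, h2⟩ | ⟨h1, h2⟩ <;> omega⟩
      unfold parP
      rw [if_neg hlvy]
      exact hpar
  rcases Gl_adj_cases C hadj with hc | hc | hc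
  · exact Or.inl hc
  · exact Or.inr (Or.inl (key u w hfu hfw hc))
  · exact Or.inr (Or.inr (key w u hfw hfu hc))

-- ===== Section 7 : abstract walks in a levelled forest =====
/-- One step of a walk on nodes: stay, go to a child, or go to the parent. -/
def Stp (lv par : ℕ → ℕ) (m m' : ℕ) : Prop :=
  m = m' ∨ (par m' = m ∧ lv m' = lv m + 1) ∨ (par m = m' ∧ lv m = lv m' + 1)

/-- The bound on the number of steps of a walk with levels `< d` and
multiplicity `≤ K` per node. -/
def bnd (K : ℕ) : ℕ → ℕ
  | 0 => 0
  | d + 1 => (K + 1) * (bnd K d + 1)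

/-- On a window where all levels are `≥ β`, all visits to level `β` are visits
to the same node. -/
lemma walk_const (lv par : ℕ → ℕ) (φ : ℕ → ℕ) :
    ∀ d s n β, (∀ i, s ≤ i → i + 1 < s + n → Stp lv par (φ i) (φ (i + 1))) →
    (∀ i, s ≤ i → i < s + n → β ≤ lv (φ i)) →
    (∀ i, s ≤ i → i < s + n → lv (φ i) < β + d) →
    ∀ i j, s ≤ i → i ≤ j → j < s + n → lv (φ i) = β → lv (φ j) = β →
      φ i = φ j := by
  intro d
  induction d with
  | zero =>
    intro s n β _ hlo hhi i j hi hij hj hbi _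
    have := hlo i hi (by omega)
    have := hhi i hi (by omega)
    omega
  | succ d ihd =>
    intro s n β hstep hlo hhi i j
    induction j using Nat.strong_induction_on with
    | _ j ihj =>
      intro hi hij hj hbi hbj
      rcases Nat.eq_or_lt_of_le hij with heq | hlt
      · rw [heq]
      · -- i < j : take the last index in [i, j) at level β
        have hne : ((Finset.Ico i j).filter (fun k => lv (φ k) = β)).Nonempty :=
          ⟨i, by simp [Finset.mem_filter, Finset.mem_Ico]; exact ⟨hlt, hbi⟩⟩
        set A := (Finset.Ico i j).filter (fun k => lv (φ k) = β) with hA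
        set k₀ := A.max' hne with hk₀
        have hk₀mem : k₀ ∈ A := A.max'_mem hne
        rw [hA, Finset.mem_filter, Finset.mem_Ico] at hk₀mem
        obtain ⟨⟨hk1, hk2⟩, hk3⟩ := hk₀mem
        have hmax : ∀ k, k₀ < k → k < j → lv (φ k) ≠ β := by
          intro k hk hkj hke
          have hkA : k ∈ A := by
            rw [hA, Finset.mem_filter, Finset.mem_Ico]
            exact ⟨⟨by omega, hkj⟩, hke⟩
          have := A.le_max' k hkA
          omega
        have hik₀ : φ i = φ k₀ := ihj k₀ (by omega) hi hk1 (by omega) hbi hk3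
        rcases Nat.eq_or_lt_of_le (show k₀ + 1 ≤ j by omega) with hj1 | hj1
        · -- adjacent step from k₀ to j
          have hst := hstep k₀ (by omega) (by omega)
          rw [hj1] at hst
          rcases hst with he | ⟨_, hh⟩ | ⟨_, hh⟩
          · rw [hik₀, he]
          · omega
          · omega
        · -- the walk strictly above β on (k₀, j)
          have hlv1 : β + 1 ≤ lv (φ (k₀ + 1)) := by
            have h1 := hlo (k₀ + 1) (by omega) (by omega)
            have h2 := hmax (k₀ + 1) (by omega) (by omega)
            omega
          have hlvj1 : β + 1 ≤ lv (φ (j - 1)) := by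
            have h1 := hlo (j - 1) (by omega) (by omega)
            have h2 := hmax (j - 1) (by omega) (by omega)
            omega
          have hstep1 := hstep k₀ (by omega) (by omega)
          have hdown : par (φ (k₀ + 1)) = φ k₀ ∧ lv (φ (k₀ + 1)) = β + 1 := by
            rcases hstep1 with he | ⟨hp, hh⟩ | ⟨hp, hh⟩
            · rw [← he] at hlv1; omega
            · exact ⟨hp, by omega⟩
            · omega
          have hstepj := hstep (j - 1) (by omega) (by omega)
          have hj1e : j - 1 + 1 = j := by omega
          rw [hj1e] at hstepj
          have hup : par (φ (j - 1)) = φ j ∧ lv (φ (j - 1)) = β + 1 := by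
            rcases hstepj with he | ⟨hp, hh⟩ | ⟨hp, hh⟩
            · rw [he] at hlvj1; omega
            · omega
            · exact ⟨hp, by omega⟩
          have hmid : φ (k₀ + 1) = φ (j - 1) := by
            apply ihd (k₀ + 1) (j - 1 - (k₀ + 1) + 1) (β + 1)
            · intro k hk1' hk2'
              exact hstep k (by omega) (by omega)
            · intro k hk1' hk2'
              have h1 := hlo k (by omega) (by omega)
              have h2 := hmax k (by omega) (by omega)
              omega
            · intro k hk1' hk2'
              have h1 := hhi k (by omega) (by omega)
              omega
            · omega
            · omega
            · omega
            · exact hdown.2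
            · exact hup.2
          rw [hik₀, ← hdown.1, hmid, hup.1]

lemma bnd_mono (K d : ℕ) : bnd K d ≤ bnd K (d + 1) := by
  have : bnd K d + 1 ≤ (K + 1) * (bnd K d + 1) :=
    Nat.le_mul_of_pos_left _ (by omega)
  show bnd K d ≤ (K + 1) * (bnd K d + 1)
  omega

/-- The main abstract bound: a walk in a levelled forest with levels in
`[β, β + d)` and at most `K` visits per node has length at most `bnd K d`. -/
lemma walk_bd (K : ℕ) (lv par : ℕ → ℕ) (φ : ℕ → ℕ) :
    ∀ d s n β, (∀ i, s ≤ i → i + 1 < s + n → Stp lv par (φ i) (φ (i + 1))) →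
    (∀ i, s ≤ i → i < s + n → β ≤ lv (φ i)) →
    (∀ i, s ≤ i → i < s + n → lv (φ i) < β + d) →
    (∀ m, ((Finset.Ico s (s + n)).filter (fun k => φ k = m)).card ≤ K) →
    n ≤ bnd K d := by
  intro d
  induction d with
  | zero =>
    intro s n β _ hlo hhi _
    by_contra hc
    push_neg at hc
    have h1 := hlo s (le_refl _) (by omega)
    have h2 := hhi s (le_refl _) (by omega)
    omega
  | succ d ihd =>
    intro s n β hstep hlo hhi hfib
    by_cases hAne : ((Finset.Ico s (s + n)).filter (fun k => lv (φ k) = β)).Nonempty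
    · set A := (Finset.Ico s (s + n)).filter (fun k => lv (φ k) = β) with hA
      set k₀ := A.min' hAne with hk₀
      have hk₀mem : k₀ ∈ A := A.min'_mem hAne
      rw [hA, Finset.mem_filter, Finset.mem_Ico] at hk₀mem
      obtain ⟨⟨hk1, hk2⟩, hk3⟩ := hk₀mem
      -- all elements of A are visits to the same node
      have hconst : ∀ k ∈ A, φ k = φ k₀ := by
        intro k hk
        have hmin := A.min'_le k hk
        rw [hA, Finset.mem_filter, Finset.mem_Ico] at hk
        exact (walk_const lv par φ (d + 1) s n β hstep hlo hhi k₀ k hk1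
          (by omega) hk.1.2 hk3 hk.2).symm
      have hcardA : A.card ≤ K := by
        have hsub : A ⊆ (Finset.Ico s (s + n)).filter (fun k => φ k = φ k₀) := by
          intro k hk
          have h1 := hconst k hk
          rw [hA, Finset.mem_filter] at hk
          rw [Finset.mem_filter]
          exact ⟨hk.1, h1⟩
        exact le_trans (Finset.card_le_card hsub) (hfib (φ k₀))
      -- injection into (count below, offset from previous A-element)
      set prev : ℕ → ℕ := fun i =>
        if hf : (A.filter (fun k => k ≤ i)).Nonempty
        then (A.filter (fun k => k ≤ i)).max' hf else s with hprev
      have hprev_le : ∀ i, s ≤ i → prev i ≤ i := by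
        intro i hi
        rw [hprev]
        dsimp only
        split_ifs with hf
        · have := (A.filter (fun k => k ≤ i)).max'_mem hf
          rw [Finset.mem_filter] at this
          exact this.2
        · exact hi
      -- the offset is bounded by bnd K d
      have hoff : ∀ i, s ≤ i → i < s + n → i - prev i ≤ bnd K d := by
        intro i hi hin
        rw [hprev]
        dsimp only
        split_ifs with hf
        · set p := (A.filter (fun k => k ≤ i)).max' hf with hp
          have hpmem := (A.filter (fun k => k ≤ i)).max'_mem hf
          rw [Finset.mem_filter] at hpmem
          obtain ⟨hpA, hpi⟩ := hpmem
          have hpw : s ≤ p ∧ p < s + n ∧ lv (φ p) = β := by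
            have h2 : p ∈ A := hpA
            rw [hA, Finset.mem_filter, Finset.mem_Ico] at h2
            exact ⟨h2.1.1, h2.1.2, h2.2⟩
          rcases Nat.eq_or_lt_of_le hpi with he | hlt
          · omega
          · -- apply IH to the window (p, i]
            have hbound := ihd (p + 1) (i - p) (β + 1)
              (fun k hk1' hk2' => hstep k (by omega) (by omega))
              (fun k hk1' hk2' => by
                have h1 := hlo k (by omega) (by omega)
                have h2 : lv (φ k) ≠ β := by
                  intro hke
                  have hkA : k ∈ A.filter (fun k => k ≤ i) := by
                    rw [Finset.mem_filter, hA, Finset.mem_filter, Finset.mem_Ico]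
                    exact ⟨⟨⟨by omega, by omega⟩, hke⟩, by omega⟩
                  have := (A.filter (fun k => k ≤ i)).le_max' k hkA
                  omega
                omega)
              (fun k hk1' hk2' => by
                have := hhi k (by omega) (by omega)
                omega)
              (fun m => by
                refine le_trans (Finset.card_le_card ?_) (hfib m)
                intro k hk
                rw [Finset.mem_filter, Finset.mem_Ico] at hk ⊢
                exact ⟨⟨by omega, by omega⟩, hk.2⟩)
            omega
        · -- no A-element at all up to i : the whole initial window is above β
          have hbound := ihd s (i + 1 - s) (β + 1)
            (fun k hk1' hk2' => hstep k (by omega) (by omega))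
            (fun k hk1' hk2' => by
              have h1 := hlo k (by omega) (by omega)
              have h2 : lv (φ k) ≠ β := by
                intro hke
                apply hf
                refine ⟨k, ?_⟩
                rw [Finset.mem_filter, hA, Finset.mem_filter, Finset.mem_Ico]
                exact ⟨⟨⟨by omega, by omega⟩, hke⟩, by omega⟩
              omega)
            (fun k hk1' hk2' => by
              have := hhi k (by omega) (by omega)
              omega)
            (fun m => by
              refine le_trans (Finset.card_le_card ?_) (hfib m)
              intro k hk
              rw [Finset.mem_filter, Finset.mem_Ico] at hk ⊢
              exact ⟨⟨by omega, by omega⟩, hk.2⟩)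
          omega
      -- build the injection
      have hinj : ∀ i ∈ Finset.Ico s (s + n), ∀ i' ∈ Finset.Ico s (s + n),
          ((A.filter (fun k => k ≤ i)).card, i - prev i) =
            ((A.filter (fun k => k ≤ i')).card, i' - prev i') → i = i' := by
        intro i hi i' hi' heq
        rw [Finset.mem_Ico] at hi hi'
        rw [Prod.mk.injEq] at heq
        obtain ⟨hc, ho⟩ := heq
        rcases Nat.lt_trichotomy i i' with hlt | he | hlt
        · exfalso
          by_cases hf' : (A.filter (fun k => k ≤ i')).Nonempty
          · by_cases hf : (A.filter (fun k => k ≤ i)).Nonempty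
            · -- both nonempty : same max
              set p := (A.filter (fun k => k ≤ i)).max' hf with hp
              set p' := (A.filter (fun k => k ≤ i')).max' hf' with hp'
              have hpmem : p ∈ A.filter (fun k => k ≤ i) := Finset.max'_mem _ hf
              have hp'mem : p' ∈ A.filter (fun k => k ≤ i') := Finset.max'_mem _ hf'
              rw [Finset.mem_filter] at hpmem hp'mem
              have hpp' : p' ≤ i := by
                by_contra hcc
                push_neg at hcc
                have hss : (A.filter (fun k => k ≤ i)) ⊂ (A.filter (fun k => k ≤ i')) := by
                  constructor
                  · intro k hk
                    rw [Finset.mem_filter] at hk ⊢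
                    exact ⟨hk.1, by omega⟩
                  · intro hcon
                    have h5 := hcon (Finset.mem_filter.mpr ⟨hp'mem.1, hp'mem.2⟩)
                    rw [Finset.mem_filter] at h5
                    omega
                have := Finset.card_lt_card hss
                omega
              have hpe : p = p' := by
                have h1 : p' ∈ A.filter (fun k => k ≤ i) :=
                  Finset.mem_filter.mpr ⟨hp'mem.1, hpp'⟩
                have h2 := (A.filter (fun k => k ≤ i)).le_max' p' h1
                have h3 : p ∈ A.filter (fun k => k ≤ i') :=
                  Finset.mem_filter.mpr ⟨hpmem.1, by omega⟩
                have h4 := (A.filter (fun k => k ≤ i')).le_max' p h3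
                omega
              have hpv : prev i = p := by rw [hprev]; dsimp only; rw [dif_pos hf]
              have hpv' : prev i' = p' := by rw [hprev]; dsimp only; rw [dif_pos hf']
              rw [hpv, hpv'] at ho
              have hple : p ≤ i := hpmem.2
              omega
            · -- i-filter empty but i'-filter nonempty : cards differ
              have h1 : (A.filter (fun k => k ≤ i)).card = 0 := by
                rw [Finset.card_eq_zero]
                exact Finset.not_nonempty_iff_eq_empty.mp hf
              have h2 : 0 < (A.filter (fun k => k ≤ i')).card :=
                Finset.card_pos.mpr hf'
              omega
          · -- both empty
            have hf : ¬ (A.filter (fun k => k ≤ i)).Nonempty := by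
              intro ⟨k, hk⟩
              apply hf'
              refine ⟨k, ?_⟩
              rw [Finset.mem_filter] at hk ⊢
              exact ⟨hk.1, by omega⟩
            have hpv : prev i = s := by rw [hprev]; dsimp only; rw [dif_neg hf]
            have hpv' : prev i' = s := by rw [hprev]; dsimp only; rw [dif_neg hf']
            rw [hpv, hpv'] at ho
            omega
        · exact he
        · -- symmetric case
          exfalso
          by_cases hf : (A.filter (fun k => k ≤ i)).Nonempty
          · by_cases hf' : (A.filter (fun k => k ≤ i')).Nonempty
            · set p := (A.filter (fun k => k ≤ i)).max' hf with hp
              set p' := (A.filter (fun k => k ≤ i')).max' hf' with hp'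
              have hpmem : p ∈ A.filter (fun k => k ≤ i) := Finset.max'_mem _ hf
              have hp'mem : p' ∈ A.filter (fun k => k ≤ i') := Finset.max'_mem _ hf'
              rw [Finset.mem_filter] at hpmem hp'mem
              have hpp' : p ≤ i' := by
                by_contra hcc
                push_neg at hcc
                have hss : (A.filter (fun k => k ≤ i')) ⊂ (A.filter (fun k => k ≤ i)) := by
                  constructor
                  · intro k hk
                    rw [Finset.mem_filter] at hk ⊢
                    exact ⟨hk.1, by omega⟩
                  · intro hcon
                    have h5 := hcon (Finset.mem_filter.mpr ⟨hpmem.1, hpmem.2⟩)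
                    rw [Finset.mem_filter] at h5
                    omega
                have := Finset.card_lt_card hss
                omega
              have hpe : p = p' := by
                have h1 : p ∈ A.filter (fun k => k ≤ i') :=
                  Finset.mem_filter.mpr ⟨hpmem.1, hpp'⟩
                have h2 := (A.filter (fun k => k ≤ i')).le_max' p h1
                have h3 : p' ∈ A.filter (fun k => k ≤ i) :=
                  Finset.mem_filter.mpr ⟨hp'mem.1, by omega⟩
                have h4 := (A.filter (fun k => k ≤ i)).le_max' p' h3
                omega
              have hpv : prev i = p := by rw [hprev]; dsimp only; rw [dif_pos hf]
              have hpv' : prev i' = p' := by rw [hprev]; dsimp only; rw [dif_pos hf']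
              rw [hpv, hpv'] at ho
              have hple : p' ≤ i' := hp'mem.2
              omega
            · have h1 : (A.filter (fun k => k ≤ i')).card = 0 := by
                rw [Finset.card_eq_zero]
                exact Finset.not_nonempty_iff_eq_empty.mp hf'
              have h2 : 0 < (A.filter (fun k => k ≤ i)).card :=
                Finset.card_pos.mpr hf
              omega
          · have hf'e : ¬ (A.filter (fun k => k ≤ i')).Nonempty := by
              intro ⟨k, hk⟩
              apply hf
              refine ⟨k, ?_⟩
              rw [Finset.mem_filter] at hk ⊢
              exact ⟨hk.1, by omega⟩
            have hpv : prev i = s := by rw [hprev]; dsimp only; rw [dif_neg hf]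
            have hpv' : prev i' = s := by rw [hprev]; dsimp only; rw [dif_neg hf'e]
            rw [hpv, hpv'] at ho
            omega
      -- count via the injection
      have hcount : n ≤ (K + 1) * (bnd K d + 1) := by
        have hmaps : ∀ i ∈ Finset.Ico s (s + n),
            ((A.filter (fun k => k ≤ i)).card, i - prev i) ∈
              Finset.range (K + 1) ×ˢ Finset.range (bnd K d + 1) := by
          intro i hi
          rw [Finset.mem_Ico] at hi
          rw [Finset.mem_product, Finset.mem_range, Finset.mem_range]
          constructor
          · have : (A.filter (fun k => k ≤ i)).card ≤ A.card :=
              Finset.card_le_card (Finset.filter_subset _ _)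
            omega
          · have := hoff i hi.1 hi.2
            omega
        have := Finset.card_le_card_of_injOn
          (fun i => ((A.filter (fun k => k ≤ i)).card, i - prev i))
          (fun i hi => hmaps i hi)
          (fun i hi i' hi' heq => hinj i hi i' hi' heq)
        rw [Nat.card_Ico] at this
        rw [Finset.card_product, Finset.card_range, Finset.card_range] at this
        omega
      show n ≤ (K + 1) * (bnd K d + 1)
      exact hcount
    · -- no visit to level β at all
      have hstep' : ∀ i, s ≤ i → i + 1 < s + n → Stp lv par (φ i) (φ (i + 1)) := hstep
      have hlo' : ∀ i, s ≤ i → i < s + n → β + 1 ≤ lv (φ i) := by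
        intro i h1 h2
        have ha := hlo i h1 h2
        have hb : lv (φ i) ≠ β := by
          intro hke
          apply hAne
          exact ⟨i, by rw [Finset.mem_filter, Finset.mem_Ico]; exact ⟨⟨h1, h2⟩, hke⟩⟩
        omega
      have hhi' : ∀ i, s ≤ i → i < s + n → lv (φ i) < (β + 1) + d := by
        intro i h1 h2
        have := hhi i h1 h2
        omega
      have := ihd s n (β + 1) hstep' hlo' hhi' hfib
      have := bnd_mono K d
      omega

-- ===== Section 8 : assembly =====
/-- Encoding of a vertex inside its bag. -/
def enc {p : ℕ} : BV p → Fin 3 ⊕ Fin 4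
  | Sum.inl (_, x) => Sum.inl x
  | Sum.inr (_, j) => Sum.inr j

lemma enc_inj {p : ℕ} {u u' : BV p} (h1 : πn u = πn u') (h2 : enc u = enc u') :
    u = u' := by
  match u, u' with
  | Sum.inl (s, x), Sum.inl (s', x') =>
    simp only [enc, Sum.inl.injEq] at h2
    simp only [πn] at h1
    have hs : s = s' := Subtype.ext (Fin.ext h1)
    rw [hs, h2]
  | Sum.inl _, Sum.inr _ => simp [enc] at h2
  | Sum.inr _, Sum.inl _ => simp [enc] at h2
  | Sum.inr (t, j), Sum.inr (t', j') =>
    simp only [enc, Sum.inr.injEq] at h2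
    simp only [πn] at h1
    have ht : t = t' := Subtype.ext (Fin.ext h1)
    rw [ht, h2]

lemma fiber_seven {p q : ℕ} (v : Fin q → BV p) (hinj : Function.Injective v) (m : ℕ) :
    ((Finset.Ico 0 (0 + q)).filter
      (fun k => (if hk : k < q then πn (v ⟨k, hk⟩) else 0) = m)).card ≤ 7 := by
  classical
  have h7 : (Finset.univ : Finset (Fin 3 ⊕ Fin 4)).card = 7 := by
    simp [Finset.card_univ]
  rw [← h7]
  apply Finset.card_le_card_of_injOn
    (fun k => if hk : k < q then enc (v ⟨k, hk⟩) else Sum.inl 0)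
  · intro k _
    exact Finset.mem_univ _
  · intro k hk k' hk' he
    simp only [Finset.coe_filter, Set.mem_setOf_eq, Finset.mem_Ico] at hk hk'
    obtain ⟨⟨_, hkq⟩, hkm⟩ := hk
    obtain ⟨⟨_, hk'q⟩, hk'm⟩ := hk'
    have hkq' : k < q := by omega
    have hk'q' : k' < q := by omega
    rw [dif_pos hkq'] at hkm
    rw [dif_pos hk'q'] at hk'm
    simp only at he
    rw [dif_pos hkq', dif_pos hk'q'] at he
    have hpi : πn (v ⟨k, hkq'⟩) = πn (v ⟨k', hk'q'⟩) := by rw [hkm, hk'm]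
    have := hinj (enc_inj hpi he)
    exact congrArg Fin.val this

/-- There is a constant `c` such that for every `ℓ ≥ 1`, every induced path
`Q = u₁…u_q` of `G_ℓ` on which `τ` is constant has order `q ≤ c`. -/
theorem statement12 :
    ∃ c : ℕ, ∀ ℓ : ℕ, 1 ≤ ℓ → ∀ C : GChoices ℓ, ∀ q : ℕ,
      ∀ v : Fin q → BV (h ℓ), IsInducedPathSeq (Gl C) v →
        (∀ i j : Fin q, tau ℓ (v i) = tau ℓ (v j)) → q ≤ c := by
  refine ⟨bnd 7 4, ?_⟩
  intro ℓ hl C q v hpath htau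
  rcases Nat.eq_zero_or_pos q with hq | hq
  · subst hq; exact Nat.zero_le _
  obtain ⟨hinj, hadj⟩ := hpath.1
  set a := tau ℓ (v ⟨0, hq⟩) with ha
  set φ : ℕ → ℕ := fun k => if hk : k < q then πn (v ⟨k, hk⟩) else 0 with hφ
  have hstep : ∀ i, 0 ≤ i → i + 1 < 0 + q →
      Stp (fun m => Lv ℓ a (nodeDepth m)) (parP ℓ a) (φ i) (φ (i + 1)) := by
    intro i _ hi
    have hi1 : i < q := by omega
    have hi2 : i + 1 < q := by omega
    have hadj' : (Gl C).Adj (v ⟨i, hi1⟩) (v ⟨i + 1, hi2⟩) :=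
      hadj ⟨i, hi1⟩ ⟨i + 1, hi2⟩ rfl
    have h1 : tau ℓ (v ⟨i, hi1⟩) = a := htau _ _
    have h2 : tau ℓ (v ⟨i + 1, hi2⟩) = a := htau _ _
    have hst := Gl_step hl C hadj' h1 h2
    have hφ1 : φ i = πn (v ⟨i, hi1⟩) := by rw [hφ]; exact dif_pos hi1
    have hφ2 : φ (i + 1) = πn (v ⟨i + 1, hi2⟩) := by rw [hφ]; exact dif_pos hi2
    rw [Stp, hφ1, hφ2]
    exact hst
  have hlo : ∀ i, 0 ≤ i → i < 0 + q → 0 ≤ Lv ℓ a (nodeDepth (φ i)) :=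
    fun i _ _ => Nat.zero_le _
  have hhi : ∀ i, 0 ≤ i → i < 0 + q → Lv ℓ a (nodeDepth (φ i)) < 0 + 4 :=
    fun i _ _ => Lv_lt_four ℓ a (nodeDepth (φ i))
  have hfib : ∀ m, ((Finset.Ico 0 (0 + q)).filter (fun k => φ k = m)).card ≤ 7 := by
    intro m
    exact fiber_seven v hinj m
  exact walk_bd 7 (fun m => Lv ℓ a (nodeDepth m)) (parP ℓ a) φ 4 0 q 0
    hstep hlo hhi hfib

end PaperDefs
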